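/- arXiv:2202.02156 — 5 statements merged into one kernel-verified Lean document; each statement's English description precedes it below -/
import Mathlib

section
/- Let (Ω, Q_1, …, Q_N) be a knowledge model and E ⊆ Ω an event. If C(E) ≠ ∅, then for each agent i the set C(E) is a union of cells of the partition Q_i; precisely, C(E) = ⋃_{ω ∈ C(E)} Q_i(ω). -/
/-- Knowledge operator of agent `i`: the set of worlds where agent `i` knows `E`. -/
def Know {Ω : Type*} {N : ℕ} (Q : Fin N → Ω → Set Ω) (i : Fin N) (E : Set Ω) : Set Ω :=
  {ω | Q i ω ⊆ E}

/-- Mutual knowledge hierarchy: `Mutual Q E 0 = E`,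
`Mutual Q E (m+1) = ⋂ i, K_i (Mutual Q E m)`. -/
def Mutual {Ω : Type*} {N : ℕ} (Q : Fin N → Ω → Set Ω) (E : Set Ω) : ℕ → Set Ω
  | 0 => E
  | m + 1 => ⋂ i : Fin N, Know Q i (Mutual Q E m)

/-- Common knowledge: `C(E) = ⋂ m, M_m(E)`. -/
def CommonKnow {Ω : Type*} {N : ℕ} (Q : Fin N → Ω → Set Ω) (E : Set Ω) : Set Ω :=
  ⋂ m : ℕ, Mutual Q E m

/-- If `C(E) ≠ ∅`, then for each agent `i`, `C(E)` is the union of the `Q i`-cells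
of its elements. -/
theorem commonKnow_eq_union_cells {Ω : Type*} [Fintype Ω] [Nonempty Ω] {N : ℕ}
    (Q : Fin N → Ω → Set Ω)
    (hmem : ∀ i ω, ω ∈ Q i ω)
    (hcell : ∀ i ω ω', ω' ∈ Q i ω → Q i ω' = Q i ω)
    (E : Set Ω)
    (hne : CommonKnow Q E ≠ ∅) :
    ∀ i : Fin N, CommonKnow Q E = ⋃ ω ∈ CommonKnow Q E, Q i ω := by
  intro i
  ext x
  constructor
  · intro hx
    exact Set.mem_biUnion hx (hmem i x)
  · intro hx
    rcases Set.mem_iUnion₂.1 hx with ⟨ω, hω, hxω⟩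
    refine Set.mem_iInter.2 fun m => ?_
    have h1 : ω ∈ Mutual Q E (m + 1) := Set.mem_iInter.1 hω (m + 1)
    have h2 : Q i ω ⊆ Mutual Q E m := Set.mem_iInter.1 h1 i
    exact h2 hxω
end

section
/- (Aumann's agreement theorem.) Let (Ω, Q_1, …, Q_N) be a knowledge model, let ℙ be a probability measure on Ω such that every cell of every partition Q_i has positive probability, let H ⊆ Ω be an event, let q_1, …, q_N ∈ [0,1], and define E := ⋂_{i=1}^N {ω ∈ Ω : ℙ(H | Q_i(ω)) = q_i}. If ℙ(C(E)) > 0, then q_1 = q_2 = ⋯ = q_N = ℙ(H | C(E)). -/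
open Classical in
/-- Probability of an event `A ⊆ Ω` under the weight function `p`. -/
noncomputable def Pr {Ω : Type*} [Fintype Ω] (p : Ω → ℝ) (A : Set Ω) : ℝ :=
  ∑ ω : Ω, if ω ∈ A then p ω else 0

/-- Conditional probability `ℙ(H | A) = ℙ(H ∩ A) / ℙ(A)`. -/
noncomputable def condPr {Ω : Type*} [Fintype Ω] (p : Ω → ℝ) (H A : Set Ω) : ℝ :=
  Pr p (H ∩ A) / Pr p A

/-- **Aumann's agreement theorem.** If the posteriors `q i` assigned to `H` by the agents
are common knowledge (on a set of positive probability), then they all coincide with the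
probability of `H` conditioned on the common knowledge set. -/
theorem aumann_agreement {Ω : Type*} [Fintype Ω] [Nonempty Ω] {N : ℕ}
    (Q : Fin N → Ω → Set Ω)
    (hmem : ∀ i ω, ω ∈ Q i ω)
    (hcell : ∀ i ω ω', ω' ∈ Q i ω → Q i ω' = Q i ω)
    (p : Ω → ℝ) (hp : ∀ ω, 0 ≤ p ω) (hsum : ∑ ω : Ω, p ω = 1)
    (hcellpos : ∀ (i : Fin N) (ω : Ω), 0 < Pr p (Q i ω))
    (H : Set Ω) (q : Fin N → ℝ) (hq : ∀ i, q i ∈ Set.Icc (0 : ℝ) 1)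
    (E : Set Ω)
    (hE : E = ⋂ i : Fin N, {ω : Ω | condPr p H (Q i ω) = q i})
    (hCpos : 0 < Pr p (CommonKnow Q E)) :
    ∀ i : Fin N, q i = condPr p H (CommonKnow Q E) := by
  classical
  intro i
  set C := CommonKnow Q E with hCdef
  have hCE : C ⊆ E := fun ω hω => Set.mem_iInter.mp hω 0
  have hself : ∀ ω ∈ C, Q i ω ⊆ C := by
    intro ω hω x hx
    refine Set.mem_iInter.mpr fun m => ?_
    have h1 := Set.mem_iInter.mp hω (m + 1)
    exact Set.mem_iInter.mp h1 i hx
  have hkey : ∀ ω ∈ C, Pr p (H ∩ Q i ω) = q i * Pr p (Q i ω) := by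
    intro ω hω
    have h1 : condPr p H (Q i ω) = q i := by
      have h2 := hCE hω
      rw [hE] at h2
      exact Set.mem_iInter.mp h2 i
    rw [condPr, div_eq_iff (ne_of_gt (hcellpos i ω))] at h1
    exact h1
  set s := Finset.univ.filter (· ∈ C) with hs
  set g : Ω → Set Ω := fun ω => Q i ω with hg
  set t := s.image g with ht
  have hmapsto : ∀ x ∈ s, g x ∈ t := fun x hx => Finset.mem_image_of_mem g hx
  have hfiber : ∀ A ∈ t, s.filter (fun x => g x = A) = Finset.univ.filter (· ∈ A) := by
    intro A hA
    obtain ⟨ω₀, hω₀s, hω₀A⟩ := Finset.mem_image.mp hA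
    have hω₀C : ω₀ ∈ C := (Finset.mem_filter.mp hω₀s).2
    ext x
    simp only [hs, Finset.mem_filter, Finset.mem_univ, true_and]
    constructor
    · rintro ⟨hxC, hgx⟩
      rw [← hgx]
      exact hmem i x
    · intro hxA
      have hxQ : x ∈ Q i ω₀ := by rw [← hω₀A] at hxA; exact hxA
      exact ⟨hself ω₀ hω₀C hxQ, (hcell i ω₀ x hxQ).trans hω₀A⟩
  have hsplit : ∀ f : Ω → ℝ,
      ∑ x ∈ s, f x = ∑ A ∈ t, ∑ x ∈ Finset.univ.filter (· ∈ A), f x := by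
    intro f
    rw [← Finset.sum_fiberwise_of_maps_to hmapsto f]
    exact Finset.sum_congr rfl fun A hA => by rw [hfiber A hA]
  have hPrfilter : ∀ A : Set Ω,
      Pr p A = ∑ x ∈ Finset.univ.filter (· ∈ A), p x := by
    intro A
    rw [Pr, Finset.sum_filter]
  have hPrHfilter : ∀ A : Set Ω,
      Pr p (H ∩ A) = ∑ x ∈ Finset.univ.filter (· ∈ A), (if x ∈ H then p x else 0) := by
    intro A
    rw [Pr, Finset.sum_filter]
    refine Finset.sum_congr rfl fun x _ => ?_
    by_cases hxA : x ∈ A <;> by_cases hxH : x ∈ H <;>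
      simp [hxA, hxH, Set.mem_inter_iff]
  have hAeq : ∀ A ∈ t, Pr p (H ∩ A) = q i * Pr p A := by
    intro A hA
    obtain ⟨ω₀, hω₀s, hω₀A⟩ := Finset.mem_image.mp hA
    have hω₀C : ω₀ ∈ C := (Finset.mem_filter.mp hω₀s).2
    rw [← hω₀A]
    exact hkey ω₀ hω₀C
  have hmain : Pr p (H ∩ C) = q i * Pr p C := by
    rw [hPrHfilter C, hPrfilter C, ← hs, hsplit, hsplit p, Finset.mul_sum]
    refine Finset.sum_congr rfl fun A hA => ?_
    rw [← hPrHfilter A, ← hPrfilter A]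
    exact hAeq A hA
  rw [condPr, hmain, mul_div_assoc, div_self (ne_of_gt hCpos), mul_one]
end

section
/- (Aumann's agreement theorem, second version.) Let (Ω, Q_1, …, Q_N) be a knowledge model, let ℙ be a probability measure on Ω such that every cell of every partition Q_i has positive probability, and let q_1, …, q_N : 𝒫(Ω) → [0,1] be functions on events. For each event H ⊆ Ω define E_H := ⋂_{i=1}^N {ω ∈ Ω : ℙ(H | Q_i(ω)) = q_i(H)}. If for every event H one has ℙ(C(E_H)) > 0, then for every event H and every agent i, q_i(H) = ℙ(H | C(E_H)); in particular q_1 = q_2 = ⋯ = q_N as functions of H. -/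
/-- **Aumann's agreement theorem, second version.** Here the posteriors are functions of
the event `H`; if for every `H` the posteriors are common knowledge (on a set of positive
probability), then for every `H` all posteriors equal `ℙ(H | C(E_H))`. -/
theorem aumann_agreement_functional {Ω : Type*} [Fintype Ω] [Nonempty Ω] {N : ℕ}
    (Q : Fin N → Ω → Set Ω)
    (hmem : ∀ i ω, ω ∈ Q i ω)
    (hcell : ∀ i ω ω', ω' ∈ Q i ω → Q i ω' = Q i ω)
    (p : Ω → ℝ) (hp : ∀ ω, 0 ≤ p ω) (hsum : ∑ ω : Ω, p ω = 1)
    (hcellpos : ∀ (i : Fin N) (ω : Ω), 0 < Pr p (Q i ω))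
    (q : Fin N → Set Ω → ℝ) (hq : ∀ i H, q i H ∈ Set.Icc (0 : ℝ) 1)
    (E : Set Ω → Set Ω)
    (hE : ∀ H : Set Ω, E H = ⋂ i : Fin N, {ω : Ω | condPr p H (Q i ω) = q i H})
    (hCpos : ∀ H : Set Ω, 0 < Pr p (CommonKnow Q (E H))) :
    ∀ (H : Set Ω) (i : Fin N), q i H = condPr p H (CommonKnow Q (E H)) := by
  classical
  intro H i
  set C : Set Ω := CommonKnow Q (E H) with hCdef
  -- C is self-evident for agent i
  have hself : ∀ ω ∈ C, Q i ω ⊆ C := by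
    intro ω hω ω' hω'
    simp only [hCdef, CommonKnow, Set.mem_iInter] at hω ⊢
    intro m
    have h1 := hω (m + 1)
    simp only [Mutual, Set.mem_iInter, Know, Set.mem_setOf_eq] at h1
    exact h1 i hω'
  have hsub : C ⊆ E H := fun ω hω => Set.mem_iInter.mp hω 0
  -- on each cell meeting C, the conditional probability equals q i H
  have hcond : ∀ ω ∈ C, Pr p (H ∩ Q i ω) = q i H * Pr p (Q i ω) := by
    intro ω hω
    have h1 : condPr p H (Q i ω) = q i H := by
      have h2 := hsub hω
      rw [hE] at h2
      exact Set.mem_iInter.mp h2 i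
    have h2 : Pr p (Q i ω) ≠ 0 := (hcellpos i ω).ne'
    unfold condPr at h1
    field_simp at h1
    linarith
  -- symmetry of cell membership
  have hiff : ∀ ω ω' : Ω, Q i ω = Q i ω' ↔ ω ∈ Q i ω' := by
    intro ω ω'
    constructor
    · intro h; rw [← h]; exact hmem i ω
    · intro h; exact hcell i ω' ω h
  -- key identity
  have key : Pr p (H ∩ C) = q i H * Pr p C := by
    unfold Pr
    rw [Finset.mul_sum]
    simp only [mul_ite, mul_zero]
    rw [← Finset.sum_fiberwise_of_maps_to (g := fun ω => Q i ω)
        (t := Finset.univ.image (fun ω => Q i ω))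
        (fun ω _ => Finset.mem_image_of_mem _ (Finset.mem_univ ω)),
      ← Finset.sum_fiberwise_of_maps_to (g := fun ω => Q i ω)
        (t := Finset.univ.image (fun ω => Q i ω))
        (fun ω _ => Finset.mem_image_of_mem _ (Finset.mem_univ ω))]
    refine Finset.sum_congr rfl fun c hc => ?_
    obtain ⟨ω₀, _, rfl⟩ := Finset.mem_image.mp hc
    by_cases hω₀ : ω₀ ∈ C
    · -- whole cell inside C
      have hcellC : Q i ω₀ ⊆ C := hself ω₀ hω₀
      trans (q i H * Pr p (Q i ω₀))
      · rw [← hcond ω₀ hω₀, Finset.sum_filter, Pr]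
        refine Finset.sum_congr rfl fun ω _ => ?_
        by_cases h : Q i ω = Q i ω₀
        · have hωc : ω ∈ Q i ω₀ := (hiff ω ω₀).mp h
          have hωC : ω ∈ C := hcellC hωc
          by_cases hH : ω ∈ H
          · simp [h, hH, hωC, hωc]
          · simp [h, hH]
        · have hωc : ω ∉ Q i ω₀ := fun hx => h ((hiff ω ω₀).mpr hx)
          simp [h, hωc]
      · rw [Pr, Finset.mul_sum, Finset.sum_filter]
        refine Finset.sum_congr rfl fun ω _ => ?_
        by_cases h : Q i ω = Q i ω₀
        · have hωc : ω ∈ Q i ω₀ := (hiff ω ω₀).mp h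
          have hωC : ω ∈ C := hcellC hωc
          simp [h, hωC, hωc]
        · have hωc : ω ∉ Q i ω₀ := fun hx => h ((hiff ω ω₀).mpr hx)
          simp [h, hωc]
    · -- cell disjoint from C
      have hdisj : ∀ ω, Q i ω = Q i ω₀ → ω ∉ C := by
        intro ω h hωC
        exact hω₀ (hself ω hωC (h ▸ hmem i ω₀ : ω₀ ∈ Q i ω))
      rw [Finset.sum_filter, Finset.sum_filter]
      refine Finset.sum_congr rfl fun ω _ => ?_
      by_cases h : Q i ω = Q i ω₀
      · have hωC := hdisj ω h
        simp [h, hωC]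
      · simp [h]
  have hCne : Pr p C ≠ 0 := (hCpos H).ne'
  rw [condPr, key, mul_div_assoc, div_self hCne, mul_one]
end

section
/- (Quantum agreement theorem.) Let (Ω, Q_1, …, Q_N) be a knowledge model, let ρ be a DOVM on Ω with values in n×n complex matrices such that Tr[ρ(Q)] ≠ 0 for every cell Q of every partition Q_i, let σ_1, …, σ_N be density operators, and define E := ⋂_{i=1}^N {ω ∈ Ω : ρ_{|Q_i(ω)} = σ_i}. If Tr[ρ(C(E))] ≠ 0, then σ_1 = σ_2 = ⋯ = σ_N = ρ_{|C(E)}. -/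
open scoped ComplexOrder

/-- The conditional state `ρ(Λ)/Tr[ρ(Λ)]` of a DOVM with respect to an event `Λ`. -/
noncomputable def condState {Ω : Type*} {n : ℕ}
    (ρ : Set Ω → Matrix (Fin n) (Fin n) ℂ) (Λ : Set Ω) : Matrix (Fin n) (Fin n) ℂ :=
  ((ρ Λ).trace)⁻¹ • ρ Λ

/-! The event `C(E)` is a union of cells of every agent. On each cell `Q` of agent `i` inside
`C(E) ⊆ E` we have `ρ(Q) = Tr[ρ(Q)] • σ_i`; this linear relation survives disjoint unions,
so it holds for `ρ(C(E))` as well, and dividing by `Tr[ρ(C(E))] ≠ 0` gives `ρ_{|C(E)} = σ_i`. -/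

section Partition

variable {Ω : Type*} {P : Ω → Set Ω}

theorem cell_eq_of_mem_of_mem (hcell : ∀ ω ω', ω' ∈ P ω → P ω' = P ω) {x ω ω' : Ω}
    (hx : x ∈ P ω) (hx' : x ∈ P ω') : P ω = P ω' :=
  (hcell ω x hx).symm.trans (hcell ω' x hx')

theorem cell_subset_or_disjoint_biUnion (hcell : ∀ ω ω', ω' ∈ P ω → P ω' = P ω)
    (ω : Ω) (S : Set Ω) :
    P ω ⊆ ⋃ ω' ∈ S, P ω' ∨ Disjoint (P ω) (⋃ ω' ∈ S, P ω') := by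
  refine or_iff_not_imp_right.2 fun h => ?_
  obtain ⟨x, hxω, hxS⟩ := Set.not_disjoint_iff.1 h
  obtain ⟨ω', hω', hxω'⟩ := Set.mem_iUnion₂.1 hxS
  rw [cell_eq_of_mem_of_mem hcell hxω hxω']
  exact Set.subset_biUnion_of_mem hω'

theorem biUnion_cells_eq_of_saturated (hmem : ∀ ω, ω ∈ P ω) {C : Set Ω}
    (hC : ∀ ω ∈ C, P ω ⊆ C) : ⋃ ω ∈ C, P ω = C :=
  (Set.iUnion₂_subset hC).antisymm fun ω hω => Set.mem_biUnion hω (hmem ω)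

theorem saturated_induction [Finite Ω] (hmem : ∀ ω, ω ∈ P ω)
    (hcell : ∀ ω ω', ω' ∈ P ω → P ω' = P ω) {p : Set Ω → Prop} (h_empty : p ∅)
    (h_union : ∀ A B, Disjoint A B → p A → p B → p (A ∪ B)) {C : Set Ω}
    (h_cells : ∀ ω ∈ C, p (P ω)) (hC : ∀ ω ∈ C, P ω ⊆ C) : p C := by
  classical
  suffices ∀ S : Finset Ω, ↑S ⊆ C → p (⋃ ω ∈ (S : Set Ω), P ω) by
    simpa only [Set.Finite.coe_toFinset, biUnion_cells_eq_of_saturated hmem hC] using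
      this C.toFinite.toFinset (by simp)
  intro S
  induction S using Finset.induction_on with
  | empty => simpa using h_empty
  | insert a S _ ih =>
    intro hS
    rw [Finset.coe_insert, Set.insert_subset_iff] at hS
    rw [Finset.coe_insert, Set.biUnion_insert]
    rcases cell_subset_or_disjoint_biUnion hcell a S with hsub | hdisj
    · rw [Set.union_eq_self_of_subset_left hsub]
      exact ih hS.2
    · exact h_union _ _ hdisj (h_cells a hS.1) (ih hS.2)

end Partition

section Knowledge

variable {Ω : Type*} {N : ℕ} (Q : Fin N → Ω → Set Ω) (E : Set Ω)

theorem commonKnow_subset : CommonKnow Q E ⊆ E :=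
  Set.iInter_subset (Mutual Q E) 0

theorem cell_subset_commonKnow {i : Fin N} {ω : Ω} (hω : ω ∈ CommonKnow Q E) :
    Q i ω ⊆ CommonKnow Q E := fun _ hω' =>
  Set.mem_iInter.2 fun m => Set.mem_iInter.1 (Set.mem_iInter.1 hω (m + 1)) i hω'

end Knowledge

section DOVM

variable {Ω : Type*} {n : ℕ} {ρ : Set Ω → Matrix (Fin n) (Fin n) ℂ}

theorem condState_eq_iff {Λ : Set Ω} {σ : Matrix (Fin n) (Fin n) ℂ}
    (hΛ : (ρ Λ).trace ≠ 0) : condState ρ Λ = σ ↔ ρ Λ = (ρ Λ).trace • σ := by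
  rw [condState, inv_smul_eq_iff₀ hΛ]

theorem map_empty_of_additive
    (hadd : ∀ Λ₁ Λ₂ : Set Ω, Disjoint Λ₁ Λ₂ → ρ (Λ₁ ∪ Λ₂) = ρ Λ₁ + ρ Λ₂) : ρ ∅ = 0 := by
  simpa using hadd ∅ ∅ (Set.disjoint_empty ∅)

theorem eq_trace_smul_union
    (hadd : ∀ Λ₁ Λ₂ : Set Ω, Disjoint Λ₁ Λ₂ → ρ (Λ₁ ∪ Λ₂) = ρ Λ₁ + ρ Λ₂)
    {σ : Matrix (Fin n) (Fin n) ℂ} {A B : Set Ω} (hAB : Disjoint A B)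
    (hA : ρ A = (ρ A).trace • σ) (hB : ρ B = (ρ B).trace • σ) :
    ρ (A ∪ B) = (ρ (A ∪ B)).trace • σ := by
  rw [hadd A B hAB, Matrix.trace_add, add_smul, ← hA, ← hB]

end DOVM

theorem quantum_agreement_general {Ω : Type*} [Fintype Ω] {N : ℕ} {n : ℕ}
    (Q : Fin N → Ω → Set Ω)
    (hmem : ∀ i ω, ω ∈ Q i ω)
    (hcell : ∀ i ω ω', ω' ∈ Q i ω → Q i ω' = Q i ω)
    (ρ : Set Ω → Matrix (Fin n) (Fin n) ℂ)
    (hadd : ∀ Λ₁ Λ₂ : Set Ω, Disjoint Λ₁ Λ₂ → ρ (Λ₁ ∪ Λ₂) = ρ Λ₁ + ρ Λ₂)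
    (hcelltr : ∀ (i : Fin N) (ω : Ω), (ρ (Q i ω)).trace ≠ 0)
    (σ : Fin N → Matrix (Fin n) (Fin n) ℂ)
    (E : Set Ω)
    (hE : E = ⋂ i : Fin N, {ω : Ω | condState ρ (Q i ω) = σ i})
    (hCtr : (ρ (CommonKnow Q E)).trace ≠ 0) :
    ∀ i : Fin N, σ i = condState ρ (CommonKnow Q E) := by
  intro i
  have h_cells : ∀ ω ∈ CommonKnow Q E, ρ (Q i ω) = (ρ (Q i ω)).trace • σ i := by
    intro ω hω
    have hωE : ω ∈ E := commonKnow_subset Q E hω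
    rw [hE] at hωE
    exact (condState_eq_iff (hcelltr i ω)).1 (Set.mem_iInter.1 hωE i)
  have h_common : ρ (CommonKnow Q E) = (ρ (CommonKnow Q E)).trace • σ i :=
    saturated_induction (hmem i) (hcell i) (p := fun Λ => ρ Λ = (ρ Λ).trace • σ i)
      (by simp [map_empty_of_additive hadd]) (fun _ _ hAB => eq_trace_smul_union hadd hAB)
      h_cells fun _ hω => cell_subset_commonKnow Q E hω
  exact ((condState_eq_iff hCtr).2 h_common).symm

/-- **Quantum agreement theorem.** If the conditional density operators `σ i` assigned by
the agents are common knowledge (on a set of nonzero trace), then they all coincide with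
the conditional state on the common knowledge set. -/
theorem quantum_agreement {Ω : Type*} [Fintype Ω] [Nonempty Ω] {N : ℕ} {n : ℕ}
    (Q : Fin N → Ω → Set Ω)
    (hmem : ∀ i ω, ω ∈ Q i ω)
    (hcell : ∀ i ω ω', ω' ∈ Q i ω → Q i ω' = Q i ω)
    (ρ : Set Ω → Matrix (Fin n) (Fin n) ℂ)
    (hpos : ∀ Λ : Set Ω, (ρ Λ).PosSemidef)
    (htr : (ρ (Set.univ : Set Ω)).trace = 1)
    (hadd : ∀ Λ₁ Λ₂ : Set Ω, Disjoint Λ₁ Λ₂ → ρ (Λ₁ ∪ Λ₂) = ρ Λ₁ + ρ Λ₂)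
    (hcelltr : ∀ (i : Fin N) (ω : Ω), (ρ (Q i ω)).trace ≠ 0)
    (σ : Fin N → Matrix (Fin n) (Fin n) ℂ)
    (hσ : ∀ i, (σ i).PosSemidef ∧ (σ i).trace = 1)
    (E : Set Ω)
    (hE : E = ⋂ i : Fin N, {ω : Ω | condState ρ (Q i ω) = σ i})
    (hCtr : (ρ (CommonKnow Q E)).trace ≠ 0) :
    ∀ i : Fin N, σ i = condState ρ (CommonKnow Q E) :=
  quantum_agreement_general Q hmem hcell ρ hadd hcelltr σ E hE hCtr
end

section
/- (Agreement theorem in GPTs.) Let (Ω, Q_1, …, Q_N) be a knowledge model, let V be a finite-dimensional real vector space, V⁺ ⊆ V a pointed convex cone, u : V → ℝ a linear functional nonnegative on V⁺, and let μ be an SVM on Ω with values in V⁺ such that u(μ(Q)) ≠ 0 for every cell Q of every partition Q_i. Let μ_1, …, μ_N ∈ 𝒮 = {x ∈ V⁺ : u(x) = 1} and define E := ⋂_{i=1}^N {ω ∈ Ω : μ_{|Q_i(ω)} = μ_i}. If u(μ(C(E))) ≠ 0, then μ_1 = μ_2 = ⋯ = μ_N = μ_{|C(E)}. -/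
/-- The conditional state `μ(Λ)/u(μ(Λ))` of an SVM with respect to an event `Λ`. -/
noncomputable def gptCondState {Ω : Type*} {V : Type*} [AddCommGroup V] [Module ℝ V]
    (u : V →ₗ[ℝ] ℝ) (μ : Set Ω → V) (Λ : Set Ω) : V :=
  (u (μ Λ))⁻¹ • μ Λ


lemma gpt_finsum_additive {Ω V : Type*} [AddCommGroup V] (μ : Set Ω → V)
    (h0 : μ ∅ = 0)
    (hadd : ∀ Λ₁ Λ₂ : Set Ω, Disjoint Λ₁ Λ₂ → μ (Λ₁ ∪ Λ₂) = μ Λ₁ + μ Λ₂)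
    (S : Finset (Set Ω)) (hdisj : ∀ s ∈ S, ∀ t ∈ S, s ≠ t → Disjoint s t) :
    μ (⋃ s ∈ S, s) = ∑ s ∈ S, μ s := by
  classical
  induction S using Finset.induction with
  | empty => simpa
  | @insert a S hnot ih =>
    have hda : Disjoint a (⋃ s ∈ S, s) := by
      rw [Set.disjoint_iUnion₂_right]
      intro s hs
      exact hdisj a (Finset.mem_insert_self a S) s (Finset.mem_insert_of_mem hs)
        (by rintro rfl; exact hnot hs)
    have hU : (⋃ s ∈ insert a S, s) = a ∪ ⋃ s ∈ S, s := by
      simp [Finset.set_biUnion_insert]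
    rw [hU, hadd _ _ hda, Finset.sum_insert hnot,
      ih (fun s hs t ht hst => hdisj s (Finset.mem_insert_of_mem hs)
        t (Finset.mem_insert_of_mem ht) hst)]

/-- **Agreement theorem in GPTs.** If the conditional states `μ i` assigned by the agents
are common knowledge (on a set with `u(μ(C(E))) ≠ 0`), then they all coincide with the
conditional state on the common knowledge set. -/
theorem gpt_agreement {Ω : Type*} [Fintype Ω] [Nonempty Ω] {N : ℕ}
    (Q : Fin N → Ω → Set Ω)
    (hmem : ∀ i ω, ω ∈ Q i ω)
    (hcell : ∀ i ω ω', ω' ∈ Q i ω → Q i ω' = Q i ω)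
    {V : Type*} [AddCommGroup V] [Module ℝ V] [FiniteDimensional ℝ V]
    (Vpos : Set V)
    (hconeAdd : ∀ x ∈ Vpos, ∀ y ∈ Vpos, x + y ∈ Vpos)
    (hconeSmul : ∀ (c : ℝ), 0 ≤ c → ∀ x ∈ Vpos, c • x ∈ Vpos)
    (hconePointed : ∀ x ∈ Vpos, -x ∈ Vpos → x = 0)
    (u : V →ₗ[ℝ] ℝ) (hu : ∀ x ∈ Vpos, 0 ≤ u x)
    (μ : Set Ω → V)
    (hμmem : ∀ Λ : Set Ω, μ Λ ∈ Vpos)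
    (hμuniv : u (μ (Set.univ : Set Ω)) = 1)
    (hμadd : ∀ Λ₁ Λ₂ : Set Ω, Disjoint Λ₁ Λ₂ → μ (Λ₁ ∪ Λ₂) = μ Λ₁ + μ Λ₂)
    (hcellu : ∀ (i : Fin N) (ω : Ω), u (μ (Q i ω)) ≠ 0)
    (μs : Fin N → V) (hμs : ∀ i, μs i ∈ Vpos ∧ u (μs i) = 1)
    (E : Set Ω)
    (hE : E = ⋂ i : Fin N, {ω : Ω | gptCondState u μ (Q i ω) = μs i})
    (hCu : u (μ (CommonKnow Q E)) ≠ 0) :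
    ∀ i : Fin N, μs i = gptCondState u μ (CommonKnow Q E) := by
  classical
  intro i
  set C := CommonKnow Q E with hCdef
  have hQC : ∀ ω ∈ C, Q i ω ⊆ C := by
    intro ω hω x hx
    simp only [hCdef, CommonKnow, Set.mem_iInter] at hω ⊢
    intro m
    have h1 := hω (m + 1)
    simp only [Mutual, Set.mem_iInter, Know, Set.mem_setOf_eq] at h1
    exact h1 i hx
  have hμ0 : μ (∅ : Set Ω) = 0 := by
    have h := hμadd ∅ ∅ disjoint_bot_left
    simp only [Set.union_self] at h
    exact add_eq_left.mp h.symm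
  have hkey : ∀ ω ∈ C, μ (Q i ω) = u (μ (Q i ω)) • μs i := by
    intro ω hω
    have hE' : ω ∈ E := by
      have h0 := Set.mem_iInter.mp hω 0
      exact h0
    rw [hE, Set.mem_iInter] at hE'
    have h1 : (u (μ (Q i ω)))⁻¹ • μ (Q i ω) = μs i := hE' i
    calc μ (Q i ω) = u (μ (Q i ω)) • ((u (μ (Q i ω)))⁻¹ • μ (Q i ω)) := by
          rw [smul_smul, mul_inv_cancel₀ (hcellu i ω), one_smul]
      _ = u (μ (Q i ω)) • μs i := by rw [h1]
  set T : Finset (Set Ω) := Finset.image (fun ω => Q i ω) (C.toFinite.toFinset) with hT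
  have hmemT : ∀ s ∈ T, ∃ ω ∈ C, Q i ω = s := by
    intro s hs
    rw [hT, Finset.mem_image] at hs
    obtain ⟨ω, hω, h⟩ := hs
    exact ⟨ω, (C.toFinite.mem_toFinset).mp hω, h⟩
  have hunion : (⋃ s ∈ T, s) = C := by
    apply Set.Subset.antisymm
    · intro x hx
      rw [Set.mem_iUnion₂] at hx
      obtain ⟨s, hs, hxs⟩ := hx
      obtain ⟨ω, hω, rfl⟩ := hmemT s hs
      exact hQC ω hω hxs
    · intro ω hω
      rw [Set.mem_iUnion₂]
      exact ⟨Q i ω, Finset.mem_image_of_mem _ ((C.toFinite.mem_toFinset).mpr hω),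
        hmem i ω⟩
  have hdisj : ∀ s ∈ T, ∀ t ∈ T, s ≠ t → Disjoint s t := by
    intro s hs t ht hst
    obtain ⟨ω, _, rfl⟩ := hmemT s hs
    obtain ⟨ω', _, rfl⟩ := hmemT t ht
    rw [Set.disjoint_left]
    intro x hx hx'
    exact hst ((hcell i ω x hx).symm.trans (hcell i ω' x hx'))
  have hsum : μ C = ∑ s ∈ T, μ s := by
    rw [← hunion]
    exact gpt_finsum_additive μ hμ0 hμadd T hdisj
  have hCval : μ C = u (μ C) • μs i := by
    have : ∀ s ∈ T, μ s = u (μ s) • μs i := by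
      intro s hs
      obtain ⟨ω, hω, rfl⟩ := hmemT s hs
      exact hkey ω hω
    have husum : u (μ C) = ∑ s ∈ T, u (μ s) := by rw [hsum, map_sum]
    calc μ C = ∑ s ∈ T, u (μ s) • μs i := by
            rw [hsum]; exact Finset.sum_congr rfl this
      _ = (∑ s ∈ T, u (μ s)) • μs i := (Finset.sum_smul).symm
      _ = u (μ C) • μs i := by rw [husum]
  rw [gptCondState, hCval, map_smul, smul_eq_mul, (hμs i).2, mul_one, smul_smul,
    inv_mul_cancel₀ hCu, one_smul]
end
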